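/- For every positive integer cc there exists a finite simple graph G with an edge clique cover of size cc and exactly cc(cc+1)/2 vertices such that G has at least 2^{cc−1} − 1 minimal separators and at least S(cc,3) potential maximal cliques, where S(cc,3) is the number of partitions of a cc-element set into exactly three nonempty parts. -/

import Mathlib

open scoped Classical

namespace PaperECC

variable {V : Type*}

/-- `nbhd G X` is N(X): vertices outside `X` with a neighbor in `X`. -/
def nbhd (G : SimpleGraph V) (X : Set V) : Set V :=
  {v | v ∉ X ∧ ∃ u ∈ X, G.Adj u v}

/-- `closedNbhd G X` is N[X] = X ∪ N(X). -/
def closedNbhd (G : SimpleGraph V) (X : Set V) : Set V :=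
  X ∪ nbhd G X

/-- closed neighborhood N[v] of a single vertex. -/
def vNbhd (G : SimpleGraph V) (v : V) : Set V :=
  insert v (G.neighborSet v)

/-- `IsCompOf G X C`: `C` is the vertex set of a connected component of `G \ X`. -/
def IsCompOf (G : SimpleGraph V) (X C : Set V) : Prop :=
  C.Nonempty ∧ Disjoint C X ∧ (G.induce C).Connected ∧
    ∀ u ∈ C, ∀ v, v ∉ X → G.Adj u v → v ∈ C

/-- `C` is a full component of `X`: a component of `G \ X` with N(C) = X. -/
def IsFullCompOf (G : SimpleGraph V) (X C : Set V) : Prop :=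
  IsCompOf G X C ∧ nbhd G C = X

/-- `S` is a minimal separator of `G`: it has at least two full components. -/
def IsMinSep (G : SimpleGraph V) (S : Set V) : Prop :=
  ∃ C D : Set V, C ≠ D ∧ IsFullCompOf G S C ∧ IsFullCompOf G S D

/-- `C` is a block of `G`: a component of `G \ N(C)` whose neighborhood is a minimal separator. -/
def IsBlock (G : SimpleGraph V) (C : Set V) : Prop :=
  IsCompOf G (nbhd G C) C ∧ IsMinSep G (nbhd G C)

/-- `H` is chordal: every (injectively embedded) cycle on at least 4 vertices has a chord,
i.e. there is no induced cycle on four or more vertices. -/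
def IsChordal (H : SimpleGraph V) : Prop :=
  ∀ n : ℕ, 4 ≤ n → ∀ f : ZMod n → V, Function.Injective f →
    (∀ i, H.Adj (f i) (f (i + 1))) →
    ∃ i j : ZMod n, i ≠ j ∧ j ≠ i + 1 ∧ i ≠ j + 1 ∧ H.Adj (f i) (f j)

/-- `H` is a triangulation of `G` (on the same vertex set). -/
def IsTri (G H : SimpleGraph V) : Prop :=
  IsChordal H ∧ G ≤ H

/-- `H` is a minimal triangulation of `G`. -/
def IsMinTri (G H : SimpleGraph V) : Prop :=
  IsTri G H ∧ ∀ H' : SimpleGraph V, IsTri G H' → H' ≤ H → H' = H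

/-- `Ω` is a maximal clique of `H`. -/
def IsMaxClique (H : SimpleGraph V) (Ω : Set V) : Prop :=
  H.IsClique Ω ∧ ∀ Ω' : Set V, H.IsClique Ω' → Ω ⊆ Ω' → Ω' = Ω

/-- `Ω` is a potential maximal clique of `G`: a maximal clique of some minimal triangulation. -/
def IsPMC (G : SimpleGraph V) (Ω : Set V) : Prop :=
  ∃ H : SimpleGraph V, IsMinTri G H ∧ IsMaxClique H Ω

/-- `W` is an edge clique cover of `G`: a finite collection of cliques covering all edges. -/
def IsECC (G : SimpleGraph V) (W : Finset (Set V)) : Prop :=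
  (∀ K ∈ W, G.IsClique K) ∧ ∀ u v : V, G.Adj u v → ∃ K ∈ W, u ∈ K ∧ v ∈ K

/-- `W[X]`: the cliques of `W` intersecting the vertex set `X`. -/
noncomputable def meeting (W : Finset (Set V)) (X : Set V) : Finset (Set V) :=
  W.filter (fun K => (K ∩ X).Nonempty)

/-- `V(G, W')`: the vertices all of whose cliques (within `W`) belong to `W'`. -/
def partVerts (W W' : Finset (Set V)) : Set V :=
  {v | ∀ K ∈ W, v ∈ K → K ∈ W'}

/-- The connected components of the subgraph of `G` induced on a vertex set `Y`. -/
def compsOf (G : SimpleGraph V) (Y : Set V) : Set (Set V) :=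
  {C | IsCompOf G Yᶜ C}

/-- `C(W')`: the components of the part `W'` of the edge clique cover `W`. -/
def partComps (G : SimpleGraph V) (W W' : Finset (Set V)) : Set (Set V) :=
  compsOf G (partVerts W W')

/-- `W'` is a good part of `W`: a nonempty subset all of whose components are blocks of `G`. -/
def IsGoodPart (G : SimpleGraph V) (W W' : Finset (Set V)) : Prop :=
  W' ⊆ W ∧ W'.Nonempty ∧ ∀ C ∈ partComps G W W', IsBlock G C

/-- The realization `R(C)` of a block `C`, as a graph supported on `N[C]`:
edges of `G[N[C]]` together with all pairs inside `N(C)`. -/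
def realization (G : SimpleGraph V) (C : Set V) : SimpleGraph V where
  Adj u v := u ≠ v ∧ u ∈ closedNbhd G C ∧ v ∈ closedNbhd G C ∧
    (G.Adj u v ∨ (u ∈ nbhd G C ∧ v ∈ nbhd G C))
  symm := by
    refine ⟨?_⟩
    intro u v h
    exact ⟨h.1.symm, h.2.2.1, h.2.1, h.2.2.2.elim (fun a => Or.inl a.symm)
      (fun a => Or.inr ⟨a.2, a.1⟩)⟩
  loopless := ⟨fun u h => h.1 rfl⟩

/-- The complete graph on the vertex set `Ω` (supported on `Ω`): all pairs inside `Ω`. -/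
def cliqueOn (Ω : Set V) : SimpleGraph V where
  Adj u v := u ≠ v ∧ u ∈ Ω ∧ v ∈ Ω
  symm := ⟨fun u v h => ⟨h.1.symm, h.2.2, h.2.1⟩⟩
  loopless := ⟨fun u h => h.1 rfl⟩

/-- The induced subgraph `G[A]`, as a graph supported on `A`. -/
def inducedOn (G : SimpleGraph V) (A : Set V) : SimpleGraph V where
  Adj u v := G.Adj u v ∧ u ∈ A ∧ v ∈ A
  symm := ⟨fun u v h => ⟨h.1.symm, h.2.2, h.2.1⟩⟩
  loopless := ⟨fun u h => G.loopless.irrefl u h.1⟩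

/-- All edges of `H` lie inside the vertex set `A` (i.e. `H` has vertex set `A`). -/
def edgesWithin (H : SimpleGraph V) (A : Set V) : Prop :=
  ∀ u v : V, H.Adj u v → u ∈ A ∧ v ∈ A

/-- `H` is a triangulation of the graph `G'` with vertex set `A`. -/
def IsTriOn (G' : SimpleGraph V) (A : Set V) (H : SimpleGraph V) : Prop :=
  IsChordal H ∧ G' ≤ H ∧ edgesWithin H A

/-- `H` is a minimal triangulation of the graph `G'` with vertex set `A`. -/
def IsMinTriOn (G' : SimpleGraph V) (A : Set V) (H : SimpleGraph V) : Prop :=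
  IsTriOn G' A H ∧ ∀ H' : SimpleGraph V, IsTriOn G' A H' → H' ≤ H → H' = H

/-- `M` is a module of `G`. -/
def IsModule (G : SimpleGraph V) (M : Set V) : Prop :=
  ∀ v ∉ M, (∀ u ∈ M, G.Adj v u) ∨ (∀ u ∈ M, ¬ G.Adj v u)


/-!
Take as vertices the unordered pairs `{a, b}` (`a = b` allowed) of a `cc`-element set, two pairs
being adjacent when they meet; the `cc` stars form an edge clique cover.

For a proper nonempty set `A` of elements, the pairs crossing `A` form a minimal separator whose
full components are the pairs inside `A` and the pairs inside its complement. The separator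
determines `A`, so the sets avoiding a fixed element give `2 ^ (cc - 1) - 1` of them.

For a partition into three parts, let `Ω` be the set of pairs crossing it. Making `Ω` and, for
each part, the pairs meeting that part into cliques gives a chordal supergraph `T`; take a minimal
triangulation `H ≤ T`. Two crossing pairs with no common element lie on a `4`-cycle of the graph
whose other diagonal is missing from `T`, so chordality of `H` forces them to be adjacent: `Ω` is
a clique of `H`. A pair outside `Ω` lies inside one part and is not adjacent in `T` to a pair
crossing the two other parts, so `Ω` is a maximal clique. Distinct partitions give distinct `Ω`.
-/

section Triangulations

variable {V : Type*} {H : SimpleGraph V} {u v w₁ w₂ : V}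

lemma natCast_zmod_ne_zero {n k : ℕ} (hk : 0 < k) (hkn : k < n) : (k : ZMod n) ≠ 0 := by
  rw [Ne, ZMod.natCast_eq_zero_iff]
  exact fun h => (Nat.le_of_dvd hk h).not_gt hkn

lemma self_ne_add_two_zmod {n : ℕ} (hn : 4 ≤ n) (i : ZMod n) : i ≠ i + 2 := by
  have h2 : ((2 : ℕ) : ZMod n) ≠ 0 := natCast_zmod_ne_zero two_pos (by omega)
  exact fun h => h2 (by push_cast; linear_combination -h)

lemma isChordal_of_exists_adj_add_two
    (h : ∀ n : ℕ, 4 ≤ n → ∀ f : ZMod n → V, Function.Injective f →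
      (∀ i, H.Adj (f i) (f (i + 1))) → ∃ i, H.Adj (f i) (f (i + 2))) :
    IsChordal H := by
  intro n hn f hf hcyc
  obtain ⟨i, hi⟩ := h n hn f hf hcyc
  have h1 : (1 : ZMod n) ≠ 0 := by exact_mod_cast natCast_zmod_ne_zero (n := n) one_pos (by omega)
  have h3 : (3 : ZMod n) ≠ 0 := by exact_mod_cast natCast_zmod_ne_zero (n := n) three_pos (by omega)
  exact ⟨i, i + 2, self_ne_add_two_zmod hn i, fun h => h1 (by linear_combination h),
    fun h => h3 (by linear_combination -h), hi⟩

lemma IsChordal.adj_of_four_cycle (hH : IsChordal H)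
    (h₁ : H.Adj u w₁) (h₂ : H.Adj w₁ v) (h₃ : H.Adj v w₂) (h₄ : H.Adj w₂ u)
    (hw : w₁ ≠ w₂) (hnw : ¬H.Adj w₁ w₂) (huv : u ≠ v) : H.Adj u v := by
  by_contra hne
  have hinj : Function.Injective (![u, w₁, v, w₂] : ZMod 4 → V) := by
    intro i j hij
    fin_cases i <;> fin_cases j <;> simp_all [h₁.ne, h₂.ne, h₃.ne, h₄.ne, h₁.ne.symm, h₂.ne.symm,
      h₃.ne.symm, h₄.ne.symm, Ne.symm huv, Ne.symm hw]
  have hcyc : ∀ i, H.Adj (![u, w₁, v, w₂] i) (![u, w₁, v, w₂] (i + 1)) := by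
    intro i
    fin_cases i <;> simpa
  obtain ⟨i, j, hij, hji, hij', hadj⟩ := hH 4 le_rfl _ hinj hcyc
  fin_cases i <;> fin_cases j <;>
    first
      | exact hij rfl
      | exact hji rfl
      | exact hij' rfl
      | exact hne hadj
      | exact hne hadj.symm
      | exact hnw hadj
      | exact hnw hadj.symm

lemma exists_isMinTri_le [Finite V] {G T : SimpleGraph V} (hT : IsTri G T) :
    ∃ H, IsMinTri G H ∧ H ≤ T := by
  have : Finite (SimpleGraph V) :=
    Finite.of_injective (fun H => H.Adj) (fun _ _ h => SimpleGraph.ext h)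
  obtain ⟨H, ⟨hHtri, hHT⟩, hmin⟩ := Set.Finite.exists_minimal
    (s := {H | IsTri G H ∧ H ≤ T}) (Set.toFinite _) ⟨T, hT, le_rfl⟩
  exact ⟨H, ⟨hHtri, fun H' hH' hle => le_antisymm hle (hmin ⟨hH', hle.trans hHT⟩ hle)⟩, hHT⟩

end Triangulations

lemma induce_connected_of_two_step {V : Type*} (G : SimpleGraph V) {C : Set V}
    (hne : C.Nonempty)
    (h : ∀ u ∈ C, ∀ v ∈ C, ∃ w ∈ C, (u = w ∨ G.Adj u w) ∧ (w = v ∨ G.Adj w v)) :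
    (G.induce C).Connected := by
  have step : ∀ {u w : V} (hu : u ∈ C) (hw : w ∈ C), u = w ∨ G.Adj u w →
      (G.induce C).Reachable ⟨u, hu⟩ ⟨w, hw⟩ := by
    rintro u w hu hw (rfl | hadj)
    exacts [.rfl, SimpleGraph.Adj.reachable hadj]
  rw [SimpleGraph.connected_iff]
  refine ⟨fun ⟨u, hu⟩ ⟨v, hv⟩ => ?_, hne.to_subtype⟩
  obtain ⟨w, hw, huw, hwv⟩ := h u hu v hv
  exact (step hu hw huw).trans (step hw hv hwv)

section PairGraph

variable {α V : Type*} (e : V ≃ Sym2 α)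

/-- The vertices are the unordered pairs `{a, b}` (`a = b` allowed) of elements of `α`, listed
by `e`; two pairs are adjacent when they share an element. -/
def pairGraph : SimpleGraph V where
  Adj x y := x ≠ y ∧ ∃ a, a ∈ e x ∧ a ∈ e y
  symm := ⟨fun _ _ ⟨hne, a, hx, hy⟩ => ⟨hne.symm, a, hy, hx⟩⟩
  loopless := ⟨fun _ h => h.1 rfl⟩

variable {e}

lemma eq_or_pairGraph_adj {x y : V} {a : α} (hx : a ∈ e x) (hy : a ∈ e y) :
    x = y ∨ (pairGraph e).Adj x y := by
  by_cases h : x = y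
  exacts [.inl h, .inr ⟨h, a, hx, hy⟩]

lemma mem_symm_mk_left (a b : α) : a ∈ e (e.symm s(a, b)) := by
  simp

lemma mem_symm_mk_right (a b : α) : b ∈ e (e.symm s(a, b)) := by
  simp

lemma mem_symm_mk_iff {a b t : α} : t ∈ e (e.symm s(a, b)) ↔ t = a ∨ t = b := by
  simp [Sym2.mem_iff]

variable (e)

def inside (A : Set α) : Set V := {x | ∀ t ∈ e x, t ∈ A}

def cut (A : Set α) : Set V := {x | (∃ s ∈ e x, s ∈ A) ∧ ∃ t ∈ e x, t ∉ A}

variable {e}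

lemma symm_mk_self_mem_inside {A : Set α} {a : α} (ha : a ∈ A) : e.symm s(a, a) ∈ inside e A :=
  fun t ht => by obtain rfl | rfl := mem_symm_mk_iff.mp ht <;> exact ha

lemma cut_compl (A : Set α) : cut e Aᶜ = cut e A := by
  ext x
  simp only [cut, Set.mem_ofPred_eq, Set.mem_compl_iff, not_not]
  tauto

lemma isCompOf_cut_inside {A : Set α} (hA : A.Nonempty) :
    IsCompOf (pairGraph e) (cut e A) (inside e A) := by
  refine ⟨⟨_, symm_mk_self_mem_inside hA.some_mem⟩, ?_, ?_, ?_⟩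
  · exact Set.disjoint_left.mpr fun x hx ⟨_, t, ht, htA⟩ => htA (hx t ht)
  · refine induce_connected_of_two_step (pairGraph e) ⟨_, symm_mk_self_mem_inside hA.some_mem⟩
      fun u hu v hv => ⟨e.symm s((e u).out.1, (e v).out.1), fun t ht => ?_, ?_, ?_⟩
    · obtain rfl | rfl := mem_symm_mk_iff.mp ht
      exacts [hu _ (Sym2.out_fst_mem _), hv _ (Sym2.out_fst_mem _)]
    · exact eq_or_pairGraph_adj (Sym2.out_fst_mem _) (mem_symm_mk_left _ _)
    · exact eq_or_pairGraph_adj (mem_symm_mk_right _ _) (Sym2.out_fst_mem _)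
  · rintro u hu v hv ⟨-, g, hgu, hgv⟩ t ht
    by_contra htA
    exact hv ⟨⟨g, hgv, hu g hgu⟩, t, ht, htA⟩

lemma nbhd_inside (A : Set α) : nbhd (pairGraph e) (inside e A) = cut e A := by
  ext v
  constructor
  · rintro ⟨hvA, u, hu, -, g, hgu, hgv⟩
    simp only [inside, Set.mem_ofPred_eq, not_forall, exists_prop] at hvA
    exact ⟨⟨g, hgv, hu g hgu⟩, hvA⟩
  · rintro ⟨⟨s, hs, hsA⟩, t, ht, htA⟩
    refine ⟨fun h => htA (h t ht), _, symm_mk_self_mem_inside hsA, fun h => htA ?_, s,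
      mem_symm_mk_left _ _, hs⟩
    rw [← h, mem_symm_mk_iff] at ht
    obtain rfl | rfl := ht <;> exact hsA

lemma isMinSep_cut {A : Set α} (hA : A.Nonempty) (hA' : Aᶜ.Nonempty) :
    IsMinSep (pairGraph e) (cut e A) := by
  refine ⟨inside e A, inside e Aᶜ, fun h => ?_, ⟨isCompOf_cut_inside hA, nbhd_inside A⟩,
    cut_compl A ▸ ⟨isCompOf_cut_inside hA', nbhd_inside Aᶜ⟩⟩
  have := h ▸ symm_mk_self_mem_inside (e := e) hA.some_mem
  exact this _ (mem_symm_mk_left _ _) hA.some_mem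

lemma mem_iff_symm_mk_mem_cut {A : Set α} {a₀ : α} (h₀ : a₀ ∉ A) (a : α) :
    a ∈ A ↔ e.symm s(a₀, a) ∈ cut e A := by
  refine ⟨fun ha => ⟨⟨a, mem_symm_mk_right _ _, ha⟩, a₀, mem_symm_mk_left _ _, h₀⟩, ?_⟩
  rintro ⟨⟨s, hs, hsA⟩, -⟩
  obtain rfl | rfl := mem_symm_mk_iff.mp hs
  exacts [absurd hsA h₀, hsA]

lemma cut_injOn (a₀ : α) : Set.InjOn (cut e) {A | a₀ ∉ A} := by
  intro A hA B hB h
  ext a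
  rw [mem_iff_symm_mk_mem_cut (A := A) hA, mem_iff_symm_mk_mem_cut (A := B) hB, h]

end PairGraph

lemma exists_eq_of_card_le_three {ι : Type*} [Fintype ι] (hι : Fintype.card ι ≤ 3)
    {p q r s : ι} (hpq : p ≠ q) (hrs : r ≠ s) : p = r ∨ p = s ∨ q = r ∨ q = s := by
  by_contra! h
  obtain ⟨hpr, hps, hqr, hqs⟩ := h
  have hinj : Function.Injective ![p, q, r, s] := by
    intro i j hij
    fin_cases i <;> fin_cases j <;> simp_all [Ne.symm hpq, Ne.symm hrs, Ne.symm hpr,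
      Ne.symm hps, Ne.symm hqr, Ne.symm hqs]
  have := Fintype.card_le_of_injective _ hinj
  simp only [Fintype.card_fin] at this
  omega

lemma exists_ne_ne_of_two_lt_card {ι : Type*} [Fintype ι] (hι : 2 < Fintype.card ι) (i : ι) :
    ∃ j k : ι, j ≠ k ∧ j ≠ i ∧ k ≠ i := by
  obtain ⟨a, b, d, hab, had, hbd⟩ := Fintype.two_lt_card_iff.mp hι
  by_cases hai : a = i
  · exact ⟨b, d, hbd, hai ▸ hab.symm, hai ▸ had.symm⟩
  by_cases hbi : b = i
  · exact ⟨a, d, had, hai, hbi ▸ hbd.symm⟩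
  · exact ⟨a, b, hab, hai, hbi⟩

section Crossing

variable {α V ι : Type*} (e : V ≃ Sym2 α) (c : α → ι)

def crossing : Set V := {x | ∃ s ∈ e x, ∃ t ∈ e x, c s ≠ c t}

def touching (i : ι) : Set V := {x | ∃ t ∈ e x, c t = i}

def crossingTri : SimpleGraph V where
  Adj u v := u ≠ v ∧ ((u ∈ crossing e c ∧ v ∈ crossing e c) ∨
    ∃ i, u ∈ touching e c i ∧ v ∈ touching e c i)
  symm := ⟨fun _ _ ⟨hne, h⟩ => ⟨hne.symm, h.imp And.symm fun ⟨i, hi⟩ => ⟨i, hi.symm⟩⟩⟩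
  loopless := ⟨fun _ h => h.1 rfl⟩

variable {e c}

lemma exists_color_of_notMem_crossing {x : V} (hx : x ∉ crossing e c) :
    ∃ i, ∀ t ∈ e x, c t = i :=
  ⟨c (e x).out.1, fun t ht => by_contra fun h => hx ⟨t, ht, _, Sym2.out_fst_mem _, h⟩⟩

lemma notMem_crossing {x : V} {i : ι} (hx : ∀ t ∈ e x, c t = i) : x ∉ crossing e c :=
  fun ⟨s, hs, t, ht, hst⟩ => hst ((hx s hs).trans (hx t ht).symm)

lemma mem_symm_mk_crossing_iff {a b : α} : e.symm s(a, b) ∈ crossing e c ↔ c a ≠ c b := by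
  refine ⟨?_, fun h => ⟨a, mem_symm_mk_left _ _, b, mem_symm_mk_right _ _, h⟩⟩
  rintro ⟨s, hs, t, ht, hst⟩
  obtain rfl | rfl := mem_symm_mk_iff.mp hs <;> obtain rfl | rfl := mem_symm_mk_iff.mp ht
  exacts [absurd rfl hst, hst, Ne.symm hst, absurd rfl hst]

lemma mem_touching_of_crossingTri_adj {w x : V} {i : ι} (hx : ∀ t ∈ e x, c t = i)
    (h : (crossingTri e c).Adj w x) : w ∈ touching e c i := by
  obtain ⟨-, ⟨-, hxc⟩ | ⟨j, hw, t, ht, rfl⟩⟩ := h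
  · exact absurd hxc (notMem_crossing hx)
  · exact hx t ht ▸ hw

lemma crossingTri_not_adj {x y : V} {i : ι} (hx : ∀ t ∈ e x, c t = i)
    (hy : ∀ t ∈ e y, c t ≠ i) : ¬(crossingTri e c).Adj x y := by
  rintro ⟨-, ⟨hxc, -⟩ | ⟨j, ⟨s, hs, rfl⟩, t, ht, htj⟩⟩
  · exact notMem_crossing hx hxc
  · exact hy t ht (htj.trans (hx s hs))

lemma pairGraph_le_crossingTri : pairGraph e ≤ crossingTri e c :=
  fun _ _ ⟨hne, a, hu, hv⟩ => ⟨hne, .inr ⟨c a, ⟨a, hu, rfl⟩, a, hv, rfl⟩⟩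

/-- A cycle inside `crossing e c` has the chord from `f 0` to `f 2`; otherwise some `f i` is a
one-coloured pair, and its two cycle neighbours both touch that colour. -/
lemma crossingTri_isChordal : IsChordal (crossingTri e c) := by
  refine isChordal_of_exists_adj_add_two fun n hn f hf hcyc => ?_
  by_cases hall : ∀ i, f i ∈ crossing e c
  · exact ⟨0, hf.ne (self_ne_add_two_zmod hn 0), .inl ⟨hall 0, hall _⟩⟩
  obtain ⟨i, hi⟩ := not_forall.mp hall
  obtain ⟨k, hk⟩ := exists_color_of_notMem_crossing hi
  have hprev : (crossingTri e c).Adj (f (i - 1)) (f i) := by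
    simpa using hcyc (i - 1)
  have hnext : (crossingTri e c).Adj (f (i - 1 + 2)) (f i) := by
    rw [show i - 1 + 2 = i + 1 by ring]
    exact (hcyc i).symm
  exact ⟨i - 1, hf.ne (self_ne_add_two_zmod hn _), .inr ⟨k,
    mem_touching_of_crossingTri_adj hk hprev, mem_touching_of_crossingTri_adj hk hnext⟩⟩

/-- Two crossing pairs `{a, b}`, `{a', b'}` with no common element and `c a = c a'` (which the
pigeonhole principle provides) lie on the `4`-cycle through `{a, a'}` and `{b, b'}`, and these
two are not adjacent in `crossingTri e c`. -/
lemma isClique_crossing [Fintype ι] (hι : Fintype.card ι ≤ 3) {H : SimpleGraph V}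
    (hH : IsChordal H) (hGH : pairGraph e ≤ H) (hHT : H ≤ crossingTri e c) :
    H.IsClique (crossing e c) := by
  rintro u ⟨a, ha, b, hb, hab⟩ v ⟨a', ha', b', hb', hab'⟩ huv
  by_cases hG : (pairGraph e).Adj u v
  · exact hGH hG
  have hdisj : ∀ t ∈ e u, t ∉ e v := fun t htu htv => hG ⟨huv, t, htu, htv⟩
  wlog hac : c a = c a' generalizing a b a' b'
  · rcases exists_eq_of_card_le_three hι hab hab' with h | h | h | h
    · exact (hac h).elim
    · exact this a ha b hb hab b' hb' a' ha' hab'.symm h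
    · exact this b hb a ha hab.symm a' ha' b' hb' hab' h
    · exact this b hb a ha hab.symm b' hb' a' ha' hab'.symm h
  have hw₁ : ∀ t ∈ e (e.symm s(a, a')), c t = c a := fun t ht => by
    obtain rfl | rfl := mem_symm_mk_iff.mp ht
    exacts [rfl, hac.symm]
  have hw₂ : ∀ t ∈ e (e.symm s(b, b')), c t ≠ c a := fun t ht => by
    obtain rfl | rfl := mem_symm_mk_iff.mp ht
    exacts [hab.symm, hac ▸ hab'.symm]
  refine hH.adj_of_four_cycle (hGH ⟨?_, a, ha, mem_symm_mk_left _ _⟩)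
    (hGH ⟨?_, a', mem_symm_mk_right _ _, ha'⟩) (hGH ⟨?_, b', hb', mem_symm_mk_right _ _⟩)
    (hGH ⟨?_, b, mem_symm_mk_left _ _, hb⟩) (fun h => hw₂ a (h ▸ mem_symm_mk_left _ _) rfl)
    (fun h => crossingTri_not_adj hw₁ hw₂ (hHT h)) huv
  · rintro rfl
    exact hdisj a' (mem_symm_mk_right _ _) ha'
  · rintro rfl
    exact hdisj a ha (mem_symm_mk_left _ _)
  · rintro rfl
    exact hdisj b hb (mem_symm_mk_left _ _)
  · intro h
    exact hdisj b' (h ▸ mem_symm_mk_right _ _) hb'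

lemma exists_mem_crossing_not_adj [Fintype ι] (hι : 2 < Fintype.card ι)
    (hc : Function.Surjective c) {x : V} (hx : x ∉ crossing e c) :
    ∃ y ∈ crossing e c, x ≠ y ∧ ¬(crossingTri e c).Adj x y := by
  obtain ⟨i, hi⟩ := exists_color_of_notMem_crossing hx
  obtain ⟨j, k, hjk, hji, hki⟩ := exists_ne_ne_of_two_lt_card hι i
  obtain ⟨a, rfl⟩ := hc j
  obtain ⟨b, rfl⟩ := hc k
  have hy : ∀ t ∈ e (e.symm s(a, b)), c t ≠ i := fun t ht => by
    obtain rfl | rfl := mem_symm_mk_iff.mp ht <;> assumption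
  refine ⟨_, mem_symm_mk_crossing_iff.mpr hjk, ?_, crossingTri_not_adj hi hy⟩
  rintro rfl
  exact hji (hi a (mem_symm_mk_left _ _))

lemma isPMC_crossing [Finite V] [Fintype ι] (hι : Fintype.card ι = 3)
    (hc : Function.Surjective c) : IsPMC (pairGraph e) (crossing e c) := by
  obtain ⟨H, hH, hHT⟩ :=
    exists_isMinTri_le (T := crossingTri e c) ⟨crossingTri_isChordal, pairGraph_le_crossingTri⟩
  refine ⟨H, hH, isClique_crossing hι.le hH.1.1 hH.1.2 hHT, fun Ω hΩ hsub => ?_⟩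
  refine Set.Subset.antisymm (fun w hw => ?_) hsub
  by_contra hwc
  obtain ⟨y, hy, hne, hnadj⟩ := exists_mem_crossing_not_adj (by omega) hc hwc
  exact hnadj (hHT (hΩ hw (hsub hy) hne))

end Crossing

section Counting

open Finset

lemma _root_.Finpartition.parts_eq_image_part {α : Type*} [Fintype α] [DecidableEq α]
    (P : Finpartition (univ : Finset α)) : P.parts = univ.image P.part := by
  ext p
  simp only [mem_image, mem_univ, true_and]
  refine ⟨fun hp => ?_, fun ⟨a, ha⟩ => ha ▸ P.part_mem.2 (mem_univ a)⟩
  obtain ⟨a, -, ha⟩ := P.part_surjOn hp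
  exact ⟨a, ha⟩

lemma _root_.Finpartition.eq_of_part_eq_part_iff {α : Type*} [Fintype α] [DecidableEq α]
    {P Q : Finpartition (univ : Finset α)}
    (h : ∀ a b, P.part a = P.part b ↔ Q.part a = Q.part b) : P = Q := by
  have hpart : P.part = Q.part := by
    ext a b
    rw [P.mem_part_iff_part_eq_part (mem_univ b) (mem_univ a),
      Q.mem_part_iff_part_eq_part (mem_univ b) (mem_univ a), h]
  exact Finpartition.ext (by rw [P.parts_eq_image_part, Q.parts_eq_image_part, hpart])

variable {α V : Type*} [Fintype α] (e : V ≃ Sym2 α)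

def partColoring [DecidableEq α] (P : Finpartition (univ : Finset α)) (a : α) : P.parts :=
  ⟨P.part a, P.part_mem.2 (mem_univ a)⟩

lemma partColoring_surjective [DecidableEq α] (P : Finpartition (univ : Finset α)) :
    Function.Surjective (partColoring P) := fun ⟨p, hp⟩ => by
  obtain ⟨a, -, ha⟩ := P.part_surjOn hp
  exact ⟨a, Subtype.ext ha⟩

lemma crossing_partColoring_injective [DecidableEq α] :
    Function.Injective fun P : Finpartition (univ : Finset α) => crossing e (partColoring P) := by
  intro P Q h
  refine Finpartition.eq_of_part_eq_part_iff fun a b => ?_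
  have hab := congrArg (e.symm s(a, b) ∈ ·) h
  simp only [mem_symm_mk_crossing_iff, ne_eq, eq_iff_iff, not_iff_not] at hab
  simpa [partColoring] using hab

lemma card_finpartition_three_le_ncard_isPMC [DecidableEq α] [Finite V] :
    Nat.card {P : Finpartition (univ : Finset α) // P.parts.card = 3} ≤
      {Ω : Set V | IsPMC (pairGraph e) Ω}.ncard := by
  rw [← Nat.card_coe_set_eq]
  refine Nat.card_le_card_of_injective (fun P => ⟨crossing e (partColoring P.1),
    isPMC_crossing (by rw [Fintype.card_coe, P.2]) (partColoring_surjective P.1)⟩) ?_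
  intro P Q h
  exact Subtype.ext (crossing_partColoring_injective e (congrArg Subtype.val h))

lemma two_pow_sub_one_le_ncard_isMinSep [Finite V] :
    2 ^ (Fintype.card α - 1) - 1 ≤ {S : Set V | IsMinSep (pairGraph e) S}.ncard := by
  rcases isEmpty_or_nonempty α with _ | ⟨⟨a₀⟩⟩
  · simp
  set D := (univ.erase a₀).powerset.erase ∅
  have hD : ∀ B ∈ D, B.Nonempty ∧ a₀ ∉ B := fun B hB => by
    obtain ⟨hne, hB⟩ := mem_erase.mp hB
    exact ⟨nonempty_iff_ne_empty.mpr hne, fun h => (notMem_erase a₀ univ) (mem_powerset.mp hB h)⟩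
  have hinj : Set.InjOn (fun B : Finset α => cut e (B : Set α)) D := by
    intro B₁ hB₁ B₂ hB₂ h
    exact_mod_cast cut_injOn a₀ (show a₀ ∉ (B₁ : Set α) from mod_cast (hD B₁ hB₁).2)
      (show a₀ ∉ (B₂ : Set α) from mod_cast (hD B₂ hB₂).2) h
  have hsep : ∀ B ∈ D, IsMinSep (pairGraph e) (cut e (B : Set α)) := fun B hB =>
    isMinSep_cut (by exact_mod_cast (hD B hB).1) ⟨a₀, (hD B hB).2⟩
  calc 2 ^ (Fintype.card α - 1) - 1 = #D := by
        rw [card_erase_of_mem (empty_mem_powerset _), card_powerset,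
          card_erase_of_mem (mem_univ _), card_univ]
    _ = #(D.image fun B : Finset α => cut e (B : Set α)) := (card_image_of_injOn hinj).symm
    _ ≤ _ := by
      rw [← Set.ncard_coe_finset]
      refine Set.ncard_le_ncard (fun S hS => ?_) (Set.toFinite _)
      obtain ⟨B, hB, rfl⟩ := mem_image.mp hS
      exact hsep B hB

noncomputable def starCover : Finset (Set V) := univ.image fun a => {x | a ∈ e x}

lemma isECC_starCover : IsECC (pairGraph e) (starCover e) := by
  refine ⟨fun K hK => ?_, fun u v ⟨_, a, hu, hv⟩ => ⟨_, mem_image_of_mem _ (mem_univ a), hu, hv⟩⟩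
  obtain ⟨a, -, rfl⟩ := mem_image.mp hK
  exact fun u hu v hv hne => ⟨hne, a, hu, hv⟩

lemma card_starCover : #(starCover e) = Fintype.card α := by
  refine (card_image_of_injective _ fun a b h => ?_).trans card_univ
  have : e.symm s(b, b) ∈ {x | a ∈ e x} := by
    rw [show {x | a ∈ e x} = {x | b ∈ e x} from h]
    exact mem_symm_mk_left _ _
  simpa [mem_symm_mk_iff] using this

end Counting

theorem tightness_example_general (cc : ℕ) :
    ∃ (G : SimpleGraph (Fin (cc * (cc + 1) / 2))) (W : Finset (Set (Fin (cc * (cc + 1) / 2)))),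
      IsECC G W ∧ W.card = cc ∧
      2 ^ (cc - 1) - 1 ≤ {S : Set (Fin (cc * (cc + 1) / 2)) | IsMinSep G S}.ncard ∧
      Nat.card {P : Finpartition (Finset.univ : Finset (Fin cc)) // P.parts.card = 3} ≤
        {Ω : Set (Fin (cc * (cc + 1) / 2)) | IsPMC G Ω}.ncard := by
  have hcard : Fintype.card (Fin (cc * (cc + 1) / 2)) = Fintype.card (Sym2 (Fin cc)) := by
    rw [Sym2.card, Fintype.card_fin, Fintype.card_fin, Nat.choose_two_right, Nat.add_sub_cancel,
      Nat.mul_comm]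
  let e := Fintype.equivOfCardEq hcard
  refine ⟨pairGraph e, starCover e, isECC_starCover e, ?_, ?_,
    card_finpartition_three_le_ncard_isPMC e⟩
  · simpa using card_starCover e
  · simpa using two_pow_sub_one_le_ncard_isMinSep e

/-- For every `cc ≥ 1` there is a graph on exactly `cc (cc + 1) / 2`
vertices with an edge clique cover of size `cc`, at least `2 ^ (cc - 1) - 1` minimal
separators, and at least `S(cc, 3)` potential maximal cliques. -/
theorem tightness_example (cc : ℕ) (hcc : 1 ≤ cc) :
    ∃ (G : SimpleGraph (Fin (cc * (cc + 1) / 2))) (W : Finset (Set (Fin (cc * (cc + 1) / 2)))),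
      IsECC G W ∧ W.card = cc ∧
      2 ^ (cc - 1) - 1 ≤ {S : Set (Fin (cc * (cc + 1) / 2)) | IsMinSep G S}.ncard ∧
      Nat.card {P : Finpartition (Finset.univ : Finset (Fin cc)) // P.parts.card = 3} ≤
        {Ω : Set (Fin (cc * (cc + 1) / 2)) | IsPMC G Ω}.ncard :=
  tightness_example_general cc

end PaperECC
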